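/- arXiv:1510.05948 — 2 statements merged into one kernel-verified Lean document; each statement's English description precedes it below -/
import Mathlib

section
/- Let n ≥ 1, let q be a positive integer, and let s, s' ∈ ℤⁿ with gcd(q, s₁, …, sₙ) = gcd(q, s'₁, …, s'ₙ) = 1. Let γ_{q,s} = diag(R(2πs₁/q), …, R(2πsₙ/q), 1) ∈ SO(2n+1) be the block-diagonal matrix built from the 2×2 rotation blocks R(2πs_j/q) followed by a final diagonal entry 1, and similarly γ_{q,s'}. Then the cyclic subgroups Γ_{q,s} = ⟨γ_{q,s}⟩ and Γ_{q,s'} = ⟨γ_{q,s'}⟩ are conjugate in SO(2n+1) if and only if there exist a permutation σ of {1, …, n}, signs ε₁, …, εₙ ∈ {±1}, and an integer ℓ coprime to q such that s_{σ(j)} ≡ ε_j ℓ s'_j (mod q) for all 1 ≤ j ≤ n. -/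
/-- The 2×2 rotation matrix `R(θ)` with rows `(cos θ, sin θ)` and `(-sin θ, cos θ)`. -/
noncomputable def rotBlock (θ : ℝ) : Matrix (Fin 2) (Fin 2) ℝ :=
  !![Real.cos θ, Real.sin θ; -Real.sin θ, Real.cos θ]

/-!
Write `γ_{q,t} = diag(R(2πt₁/q), …, R(2πtₙ/q), 1)`; then `γ_{q,t}ᵏ = γ_{q,kt}`, and `γ_{q,t}`
depends only on `t mod q`.

If `t_{σ(j)} ≡ ε_j u_j (mod q)`, permuting the blocks by `σ` and reflecting those with `ε_j = -1`
conjugates `γ_{q,t}` to `γ_{q,u}` inside `O(2n+1)`; the sign of the last coordinate commutes with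
every `γ_{q,t}` and makes the conjugator special orthogonal. With `u = ℓs'` this carries `Γ_{q,s}`
onto the group generated by `γ_{q,s'}^ℓ`, which is `Γ_{q,s'}` since `ℓ` is a unit mod `q`.

Conversely, a conjugator sends `γ_{q,s}` to a power `γ_{q,s'}^ℓ = γ_{q,ℓs'}`. Equal characteristic
polynomials, with complex roots `1` and `e^{±2πi t_j/q}`, force the multisets `{±s_j}` and
`{±ℓs'_j}` in `ℤ/q` to agree, which gives `σ` and the signs; and `ℓ` is a unit mod `q` because
the `s_j`, all multiples of `ℓ` mod `q`, generate `ℤ/q`.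
-/

open Matrix Polynomial Real

lemma image_conj_setOf_pow {M : Type*} [Monoid M] (u : Mˣ) (x : M) :
    (fun y => (u : M) * y * ↑u⁻¹) '' {y | ∃ k : ℕ, y = x ^ k} =
      {y | ∃ k : ℕ, y = ((u : M) * x * ↑u⁻¹) ^ k} := by
  ext y
  simp [Units.conj_pow, eq_comm]

lemma setOf_pow_pow_eq_of_coprime {M : Type*} [Monoid M] {x : M} {n : ℕ}
    (h : n.Coprime (orderOf x)) : {y | ∃ k : ℕ, y = (x ^ n) ^ k} = {y | ∃ k : ℕ, y = x ^ k} := by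
  obtain ⟨m, hm⟩ := exists_pow_eq_self_of_coprime h
  ext y
  constructor
  · rintro ⟨k, rfl⟩
    exact ⟨n * k, (pow_mul x n k).symm⟩
  · rintro ⟨k, rfl⟩
    exact ⟨m * k, by rw [pow_mul, hm]⟩

lemma Int.gcd_eq_one_of_forall_modEq_mul {α : Type*} {s : Finset α} {f : α → ℤ} {q ℓ : ℤ}
    (hf : Int.gcd q (s.gcd f) = 1) (h : ∀ i ∈ s, ∃ c, f i ≡ ℓ * c [ZMOD q]) :
    Int.gcd ℓ q = 1 := by
  have hdq : (Int.gcd ℓ q : ℤ) ∣ q := Int.gcd_dvd_right ℓ q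
  have hdf : (Int.gcd ℓ q : ℤ) ∣ s.gcd f := Finset.dvd_gcd fun i hi => by
    obtain ⟨c, hc⟩ := h i hi
    simpa using dvd_sub ((Int.gcd_dvd_left ℓ q).mul_right c) (hdq.trans hc.dvd)
  have hd1 := Int.dvd_gcd hdq hdf
  rw [hf] at hd1
  exact Nat.dvd_one.mp (by exact_mod_cast hd1)

lemma exists_natCast_modEq_coprime {q : ℕ} (hq : q ≠ 0) {ℓ : ℤ} (hℓ : Int.gcd ℓ q = 1) :
    ∃ L : ℕ, (L : ℤ) ≡ ℓ [ZMOD q] ∧ L.Coprime q := by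
  have hnn : 0 ≤ ℓ % q := Int.emod_nonneg _ (by exact_mod_cast hq)
  refine ⟨(ℓ % q).toNat, ?_, ?_⟩
  · rw [Int.toNat_of_nonneg hnn]
    exact Int.mod_modEq ℓ q
  · rw [Nat.Coprime, ← Int.gcd_natCast_natCast, Int.toNat_of_nonneg hnn, Int.gcd_emod, hℓ]

lemma exists_perm_comp_eq_of_map_univ_eq {α β : Type*} [Fintype α] [DecidableEq β]
    {f g : α → β} (h : Finset.univ.val.map f = Finset.univ.val.map g) :
    ∃ σ : Equiv.Perm α, ∀ a, f (σ a) = g a := by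
  have hcard : ∀ b, Fintype.card {a // g a = b} = Fintype.card {a // f a = b} := fun b => by
    simp only [Fintype.card_subtype, Finset.card, Finset.filter_val,
      ← Multiset.countP_map _ _ (· = b), h]
  exact ⟨Equiv.ofFiberEquiv fun b => Fintype.equivOfCardEq (hcard b),
    fun a => Equiv.ofFiberEquiv_map _ a⟩

section PlusMinus

variable {ι α : Type*} [Fintype ι]

def pmMultiset [Neg α] (v : ι → α) : Multiset α :=
  Finset.univ.val.bind fun i => {v i, -v i}

/-- Under `x ↦ s(x, -x)`, each pair `{v i, -v i}` becomes one unordered pair counted twice. -/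
lemma exists_perm_of_pmMultiset_eq [InvolutiveNeg α] [DecidableEq α] {v w : ι → α}
    (h : pmMultiset v = pmMultiset w) :
    ∃ σ : Equiv.Perm ι, ∀ i, v (σ i) = w i ∨ v (σ i) = -w i := by
  have hpairs : ∀ u : ι → α, (pmMultiset u).map (fun x => s(x, -x)) =
      2 • Finset.univ.val.map fun i => s(u i, -u i) := fun u => by
    simp [pmMultiset, Sym2.eq_swap, two_nsmul, Multiset.bind_cons]
  obtain ⟨σ, hσ⟩ := exists_perm_comp_eq_of_map_univ_eq
    (nsmul_right_injective two_ne_zero ((hpairs v).symm.trans ((congrArg _ h).trans (hpairs w))))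
  exact ⟨σ, fun i => (Sym2.eq_iff.mp (hσ i)).imp And.left And.left⟩

end PlusMinus

namespace Matrix

variable {ι m R : Type*} [Fintype ι] [DecidableEq ι] [Fintype m] [DecidableEq m] [CommRing R]

lemma charmatrix_blockDiagonal (M : ι → Matrix m m R) :
    charmatrix (blockDiagonal M) = blockDiagonal fun i => charmatrix (M i) := by
  refine Matrix.ext fun ⟨a, i⟩ ⟨b, j⟩ => ?_
  by_cases h : i = j <;> simp [charmatrix_apply, blockDiagonal_apply, diagonal_apply, h]

lemma charpoly_blockDiagonal (M : ι → Matrix m m R) :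
    (blockDiagonal M).charpoly = ∏ i, (M i).charpoly := by
  rw [charpoly, charmatrix_blockDiagonal, det_blockDiagonal]
  rfl

end Matrix

lemma rotBlock_zero : rotBlock 0 = 1 := by
  ext i j
  fin_cases i <;> fin_cases j <;> simp [rotBlock]

lemma rotBlock_add (a b : ℝ) : rotBlock (a + b) = rotBlock a * rotBlock b := by
  ext i j
  fin_cases i <;> fin_cases j <;> simp [rotBlock, cos_add, sin_add] <;> ring

lemma rotBlock_add_int_mul_two_pi (θ : ℝ) (k : ℤ) : rotBlock (θ + k * (2 * π)) = rotBlock θ := by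
  simp only [rotBlock, cos_add_int_mul_two_pi, sin_add_int_mul_two_pi]

lemma rotBlock_two_pi_mul_div_eq_of_modEq {q : ℕ} {a b : ℤ} (h : a ≡ b [ZMOD q]) :
    rotBlock (2 * π * a / q) = rotBlock (2 * π * b / q) := by
  obtain ⟨c, hc⟩ := h.dvd
  rcases eq_or_ne q 0 with rfl | hq
  · simp
  · have hb : (b : ℝ) = a + q * c := by exact_mod_cast (by linarith : b = a + q * c)
    rw [← rotBlock_add_int_mul_two_pi (2 * π * a / q) c, hb]
    congr 1
    field_simp

lemma diagonal_mul_rotBlock_mul_diagonal {ε : ℝ} (hε : ε = 1 ∨ ε = -1) (θ : ℝ) :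
    diagonal ![1, ε] * rotBlock θ * diagonal ![1, ε] = rotBlock (ε * θ) := by
  rcases hε with rfl | rfl <;>
  · ext i j
    fin_cases i <;> fin_cases j <;> simp [rotBlock]

lemma map_charpoly_rotBlock (θ : ℝ) :
    (rotBlock θ).charpoly.map (algebraMap ℝ ℂ) =
      (X - C (Complex.exp (θ * Complex.I))) * (X - C (Complex.exp (-θ * Complex.I))) := by
  have htrace : ((2 * cos θ : ℝ) : ℂ) =
      Complex.exp (θ * Complex.I) + Complex.exp (-θ * Complex.I) := by
    push_cast
    rw [Complex.cos, neg_mul]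
    ring
  have hdet : Complex.exp (θ * Complex.I) * Complex.exp (-θ * Complex.I) = 1 := by
    rw [← Complex.exp_add]
    simp
  rw [charpoly_fin_two, trace_fin_two, det_fin_two]
  simp only [rotBlock, of_apply, cons_val', cons_val_zero, cons_val_one, empty_val',
    cons_val_fin_one]
  rw [show cos θ + cos θ = 2 * cos θ by ring,
    show cos θ * cos θ - sin θ * -sin θ = 1 by nlinarith [sin_sq_add_cos_sq θ]]
  simp only [Polynomial.map_add, Polynomial.map_sub, Polynomial.map_mul, Polynomial.map_pow,
    map_X, map_C, map_one, Polynomial.map_one]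
  rw [Complex.coe_algebraMap, htrace, C_add, ← C_1, ← hdet, C_mul]
  ring

section RotDiag

variable {ι : Type*} [DecidableEq ι]

noncomputable def rotDiag (θ : ι → ℝ) : Matrix ((Fin 2 × ι) ⊕ Unit) ((Fin 2 × ι) ⊕ Unit) ℝ :=
  fromBlocks (blockDiagonal fun i => rotBlock (θ i)) 0 0 1

/-- The matrix `γ_{q,t}`. -/
noncomputable def rotDiagInt (q : ℕ) (t : ι → ℤ) :
    Matrix ((Fin 2 × ι) ⊕ Unit) ((Fin 2 × ι) ⊕ Unit) ℝ :=
  rotDiag fun i => 2 * π * t i / q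

def blockPerm (σ : Equiv.Perm ι) : Equiv.Perm ((Fin 2 × ι) ⊕ Unit) :=
  Equiv.sumCongr (Equiv.prodCongr (Equiv.refl _) σ) (Equiv.refl _)

noncomputable def signDiag (ε : ι → ℝ) : Matrix ((Fin 2 × ι) ⊕ Unit) ((Fin 2 × ι) ⊕ Unit) ℝ :=
  fromBlocks (blockDiagonal fun i => diagonal ![1, ε i]) 0 0 1

lemma rotDiag_zero : rotDiag (0 : ι → ℝ) = 1 := by
  simp [rotDiag, rotBlock_zero, ← Pi.one_def, fromBlocks_one]

lemma rotDiagInt_eq_of_modEq {q : ℕ} {t u : ι → ℤ} (h : ∀ i, t i ≡ u i [ZMOD q]) :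
    rotDiagInt q t = rotDiagInt q u := by
  simp only [rotDiagInt, rotDiag, rotBlock_two_pi_mul_div_eq_of_modEq (h _)]

lemma signDiag_transpose (ε : ι → ℝ) : (signDiag ε)ᵀ = signDiag ε := by
  simp [signDiag, fromBlocks_transpose]

variable [Fintype ι]

lemma rotDiag_add (θ φ : ι → ℝ) : rotDiag (θ + φ) = rotDiag θ * rotDiag φ := by
  simp [rotDiag, fromBlocks_multiply, rotBlock_add, blockDiagonal_mul]

lemma rotDiag_pow (θ : ι → ℝ) (k : ℕ) : rotDiag θ ^ k = rotDiag (k • θ) := by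
  induction k with
  | zero => simp [rotDiag_zero]
  | succ k ih => rw [pow_succ, ih, ← rotDiag_add, succ_nsmul]

lemma rotDiagInt_pow (q : ℕ) (t : ι → ℤ) (k : ℕ) :
    rotDiagInt q t ^ k = rotDiagInt q fun i => k * t i := by
  rw [rotDiagInt, rotDiag_pow]
  congr 1
  ext i
  simp only [Pi.smul_apply, nsmul_eq_mul]
  push_cast
  ring

lemma rotDiagInt_pow_self (q : ℕ) (t : ι → ℤ) : rotDiagInt q t ^ q = 1 := by
  rw [rotDiagInt_pow, rotDiagInt_eq_of_modEq (u := 0) fun i => (dvd_mul_right _ _).modEq_zero_int]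
  simp [rotDiagInt, ← Pi.zero_def, rotDiag_zero]

lemma map_charpoly_rotDiag (θ : ι → ℝ) :
    (rotDiag θ).charpoly.map (algebraMap ℝ ℂ) =
      (∏ i, (X - C (Complex.exp (θ i * Complex.I))) * (X - C (Complex.exp (-θ i * Complex.I)))) *
        (X - 1) := by
  simp [rotDiag, charpoly_fromBlocks_zero₂₁, charpoly_blockDiagonal, charpoly_one,
    Polynomial.map_prod, map_charpoly_rotBlock]

lemma roots_map_charpoly_rotDiagInt (q : ℕ) [NeZero q] (t : ι → ℤ) :
    ((rotDiagInt q t).charpoly.map (algebraMap ℝ ℂ)).roots =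
      (0 ::ₘ pmMultiset fun i => (t i : ZMod q)).map ZMod.stdAddChar := by
  have hexp : ∀ a : ℤ,
      Complex.exp ((2 * π * a / q : ℝ) * Complex.I) = ZMod.stdAddChar (a : ZMod q) := fun a => by
    rw [ZMod.stdAddChar_coe]
    push_cast
    ring_nf
  have hchar : (rotDiagInt q t).charpoly.map (algebraMap ℝ ℂ) =
      (((0 ::ₘ pmMultiset fun i => (t i : ZMod q)).map ZMod.stdAddChar).map
        fun z => X - C z).prod := by
    rw [rotDiagInt, map_charpoly_rotDiag, mul_comm]
    simp only [pmMultiset, Multiset.map_cons, Multiset.prod_cons, Multiset.map_bind,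
      Multiset.prod_bind, AddChar.map_zero_eq_one, map_one, Finset.prod_eq_multiset_prod]
    congr 2
    refine Multiset.map_congr rfl fun i _ => ?_
    have hneg : -((2 * π * t i / q : ℝ) : ℂ) = ((2 * π * (-t i : ℤ) / q : ℝ) : ℂ) := by
      push_cast
      ring
    rw [hneg, hexp, hexp]
    simp
  rw [hchar, roots_multiset_prod_X_sub_C]

lemma pmMultiset_eq_of_charpoly_rotDiagInt_eq {q : ℕ} [NeZero q] {t u : ι → ℤ}
    (h : (rotDiagInt q t).charpoly = (rotDiagInt q u).charpoly) :
    pmMultiset (fun i => (t i : ZMod q)) = pmMultiset fun i => (u i : ZMod q) := by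
  have hroots := congrArg (fun p => (p.map (algebraMap ℝ ℂ)).roots) h
  simp only [roots_map_charpoly_rotDiagInt] at hroots
  exact (Multiset.cons_inj_right 0).mp (Multiset.map_injective ZMod.injective_stdAddChar hroots)

lemma exists_perm_sign_of_charpoly_rotDiagInt_eq {q : ℕ} [NeZero q] {t u : ι → ℤ}
    (h : (rotDiagInt q t).charpoly = (rotDiagInt q u).charpoly) :
    ∃ (σ : Equiv.Perm ι) (ε : ι → ℤ), (∀ i, ε i = 1 ∨ ε i = -1) ∧
      ∀ i, t (σ i) ≡ ε i * u i [ZMOD q] := by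
  obtain ⟨σ, hσ⟩ := exists_perm_of_pmMultiset_eq (pmMultiset_eq_of_charpoly_rotDiagInt_eq h)
  have hsign : ∀ i, ∃ e : ℤ, (e = 1 ∨ e = -1) ∧ t (σ i) ≡ e * u i [ZMOD q] := fun i => by
    simp only [← ZMod.intCast_eq_intCast_iff, Int.cast_mul]
    rcases hσ i with hi | hi
    · exact ⟨1, Or.inl rfl, by simpa using hi⟩
    · exact ⟨-1, Or.inr rfl, by simpa using hi⟩
  choose ε hε using hsign
  exact ⟨σ, ε, fun i => (hε i).1, fun i => (hε i).2⟩

lemma permMatrix_blockPerm_mul_rotDiag (σ : Equiv.Perm ι) (θ : ι → ℝ) :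
    (blockPerm σ).permMatrix ℝ * rotDiag θ * ((blockPerm σ).permMatrix ℝ)ᵀ = rotDiag (θ ∘ σ) := by
  rw [transpose_permMatrix, PEquiv.toMatrix_toPEquiv_mul, PEquiv.mul_toMatrix_toPEquiv]
  refine Matrix.ext fun a b => ?_
  rcases a with ⟨e, i⟩ | u <;> rcases b with ⟨e', j⟩ | u' <;>
    simp [blockPerm, rotDiag, blockDiagonal_apply, Equiv.Perm.inv_def, Equiv.prodCongr_symm]

lemma permMatrix_blockPerm_mem_orthogonalGroup (σ : Equiv.Perm ι) :
    (blockPerm σ).permMatrix ℝ ∈ orthogonalGroup _ ℝ := by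
  rw [mem_orthogonalGroup_iff, transpose_permMatrix, ← permMatrix_mul, inv_mul_cancel,
    permMatrix_one]

lemma signDiag_mul_rotDiag {ε : ι → ℝ} (hε : ∀ i, ε i = 1 ∨ ε i = -1) (θ : ι → ℝ) :
    signDiag ε * rotDiag θ * signDiag ε = rotDiag (ε * θ) := by
  simp only [signDiag, rotDiag, fromBlocks_multiply, ← blockDiagonal_mul, Matrix.mul_zero,
    Matrix.zero_mul, add_zero, zero_add, Matrix.mul_one, Pi.mul_apply,
    diagonal_mul_rotBlock_mul_diagonal (hε _)]

lemma signDiag_mem_orthogonalGroup {ε : ι → ℝ} (hε : ∀ i, ε i = 1 ∨ ε i = -1) :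
    signDiag ε ∈ orthogonalGroup _ ℝ := by
  rw [mem_orthogonalGroup_iff, signDiag_transpose]
  simpa [rotDiag_zero] using signDiag_mul_rotDiag hε 0

lemma exists_mem_orthogonalGroup_conj_rotDiag (σ : Equiv.Perm ι) {ε : ι → ℝ}
    (hε : ∀ i, ε i = 1 ∨ ε i = -1) (θ : ι → ℝ) :
    ∃ g ∈ orthogonalGroup _ ℝ, g * rotDiag θ * gᵀ = rotDiag fun i => ε i * θ (σ i) := by
  refine ⟨signDiag ε * (blockPerm σ).permMatrix ℝ,
    mul_mem (signDiag_mem_orthogonalGroup hε) (permMatrix_blockPerm_mem_orthogonalGroup σ), ?_⟩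
  rw [transpose_mul, signDiag_transpose, show (fun i => ε i * θ (σ i)) = ε * (θ ∘ σ) from rfl,
    ← signDiag_mul_rotDiag hε, ← permMatrix_blockPerm_mul_rotDiag]
  simp only [Matrix.mul_assoc]

/-- `diag(1, …, 1, det g)` centralises every `rotDiag`, so it corrects the determinant of `g`. -/
lemma exists_mem_specialOrthogonalGroup_conj_rotDiag_of_mem_orthogonalGroup
    {g : Matrix ((Fin 2 × ι) ⊕ Unit) ((Fin 2 × ι) ⊕ Unit) ℝ} (hg : g ∈ orthogonalGroup _ ℝ)
    {θ φ : ι → ℝ} (h : g * rotDiag θ * gᵀ = rotDiag φ) :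
    ∃ g' ∈ specialOrthogonalGroup _ ℝ, g' * rotDiag θ * g'⁻¹ = rotDiag φ := by
  rw [mem_orthogonalGroup_iff] at hg
  have hdet : g.det * g.det = 1 := by
    simpa [det_mul, det_transpose] using congrArg det hg
  set E : Matrix ((Fin 2 × ι) ⊕ Unit) ((Fin 2 × ι) ⊕ Unit) ℝ := fromBlocks 1 0 0 (g.det • 1)
  have hE : ∀ ψ : ι → ℝ, E * rotDiag ψ * Eᵀ = rotDiag ψ := fun ψ => by
    simp [E, rotDiag, fromBlocks_transpose, fromBlocks_multiply, smul_smul, hdet]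
  have hEg : E * g * (E * g)ᵀ = 1 := by
    rw [transpose_mul, show E * g * (gᵀ * Eᵀ) = E * (g * gᵀ) * Eᵀ by simp only [Matrix.mul_assoc],
      hg, ← rotDiag_zero, hE]
  refine ⟨E * g, mem_specialOrthogonalGroup_iff.mpr ⟨(mem_orthogonalGroup_iff _ _).mpr hEg, ?_⟩, ?_⟩
  · simpa [E] using hdet
  · rw [inv_eq_right_inv hEg, transpose_mul, ← hE φ, ← h]
    simp only [Matrix.mul_assoc]

lemma exists_mem_specialOrthogonalGroup_conj_rotDiagInt {q : ℕ} {t u : ι → ℤ}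
    (σ : Equiv.Perm ι) {ε : ι → ℤ} (hε : ∀ i, ε i = 1 ∨ ε i = -1)
    (h : ∀ i, t (σ i) ≡ ε i * u i [ZMOD q]) :
    ∃ g ∈ specialOrthogonalGroup _ ℝ, g * rotDiagInt q t * g⁻¹ = rotDiagInt q u := by
  obtain ⟨g, hg, hconj⟩ := exists_mem_orthogonalGroup_conj_rotDiag σ (ε := fun i => (ε i : ℝ))
    (fun i => by rcases hε i with h | h <;> simp [h]) fun i => 2 * π * t i / q
  refine exists_mem_specialOrthogonalGroup_conj_rotDiag_of_mem_orthogonalGroup hg (hconj.trans ?_)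
  have hflip : rotDiagInt q (fun i => ε i * t (σ i)) = rotDiagInt q u := by
    refine rotDiagInt_eq_of_modEq fun i => ?_
    have hsq : ε i * ε i = 1 := by rcases hε i with h | h <;> simp [h]
    simpa [← mul_assoc, hsq] using (h i).mul_left (ε i)
  change _ = rotDiagInt q u
  rw [← hflip, rotDiagInt]
  congr 1
  ext i
  push_cast
  ring

end RotDiag

theorem conjugate_cyclic_subgroups_SO_odd_iff_general
    (n : ℕ) (q : ℕ) (hq : 0 < q) (s s' : Fin n → ℤ)
    (hs : Int.gcd (q : ℤ) (Finset.univ.gcd s) = 1)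
    (γ γ' : Matrix ((Fin 2 × Fin n) ⊕ Unit) ((Fin 2 × Fin n) ⊕ Unit) ℝ)
    (hγ : γ = Matrix.fromBlocks
      (Matrix.blockDiagonal fun i => rotBlock (2 * Real.pi * (s i : ℝ) / (q : ℝ))) 0 0 1)
    (hγ' : γ' = Matrix.fromBlocks
      (Matrix.blockDiagonal fun i => rotBlock (2 * Real.pi * (s' i : ℝ) / (q : ℝ))) 0 0 1) :
    (∃ g : Matrix ((Fin 2 × Fin n) ⊕ Unit) ((Fin 2 × Fin n) ⊕ Unit) ℝ,
        g ∈ Matrix.specialOrthogonalGroup ((Fin 2 × Fin n) ⊕ Unit) ℝ ∧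
          (fun x => g * x * g⁻¹) '' {x | ∃ k : ℕ, x = γ ^ k} = {x | ∃ k : ℕ, x = γ' ^ k}) ↔
      ∃ (σ : Equiv.Perm (Fin n)) (ε : Fin n → ℤ) (ℓ : ℤ),
        (∀ j, ε j = 1 ∨ ε j = -1) ∧ Int.gcd ℓ (q : ℤ) = 1 ∧
          ∀ j, s (σ j) ≡ ε j * ℓ * s' j [ZMOD (q : ℤ)] := by
  have : NeZero q := ⟨hq.ne'⟩
  change γ = rotDiagInt q s at hγ
  change γ' = rotDiagInt q s' at hγ'
  subst hγ hγ'
  have hunit : ∀ g ∈ specialOrthogonalGroup ((Fin 2 × Fin n) ⊕ Unit) ℝ, IsUnit g := fun g hg =>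
    (isUnit_iff_isUnit_det g).mpr (by simp [(mem_specialOrthogonalGroup_iff.mp hg).2])
  constructor
  · rintro ⟨g, hg, himg⟩
    obtain ⟨g, rfl⟩ := hunit g hg
    rw [← coe_units_inv, image_conj_setOf_pow] at himg
    obtain ⟨L, hL⟩ := (Set.ext_iff.mp himg _).mp ⟨1, (pow_one _).symm⟩
    rw [rotDiagInt_pow, coe_units_inv] at hL
    obtain ⟨σ, ε, hε, hσ⟩ := exists_perm_sign_of_charpoly_rotDiagInt_eq
      ((charpoly_units_conj g _).symm.trans (congrArg charpoly hL))
    refine ⟨σ, ε, L, hε, Int.gcd_eq_one_of_forall_modEq_mul hs fun i _ =>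
      ⟨ε (σ.symm i) * s' (σ.symm i), ?_⟩, fun j => ?_⟩
    · simpa [mul_left_comm] using hσ (σ.symm i)
    · simpa [mul_assoc] using hσ j
  · rintro ⟨σ, ε, ℓ, hε, hℓ, hσ⟩
    obtain ⟨L, hLℓ, hLq⟩ := exists_natCast_modEq_coprime hq.ne' hℓ
    obtain ⟨g, hg, hconj⟩ := exists_mem_specialOrthogonalGroup_conj_rotDiagInt σ hε
      (u := fun j => L * s' j) fun j => (hσ j).trans <| by
        rw [mul_assoc]
        exact (hLℓ.symm.mul_right _).mul_left _
    refine ⟨g, hg, ?_⟩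
    obtain ⟨g, rfl⟩ := hunit g hg
    rw [← coe_units_inv, image_conj_setOf_pow, coe_units_inv, hconj, ← rotDiagInt_pow,
      setOf_pow_pow_eq_of_coprime
        (hLq.coprime_dvd_right (orderOf_dvd_of_pow_eq_one (rotDiagInt_pow_self q s')))]

/-- **Conjugacy of cyclic subgroups of SO(2n+1).**
For `q ≥ 1` and `s, s' ∈ ℤⁿ` with `gcd(q, s) = gcd(q, s') = 1`, the cyclic subgroups of
`SO(2n+1)` generated by `γ_{q,s} = diag(R(2πs₁/q), …, R(2πsₙ/q), 1)` and `γ_{q,s'}`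
are conjugate in `SO(2n+1)` iff `s_{σ(j)} ≡ ε_j ℓ s'_j (mod q)` for all `j`, for some
permutation `σ`, signs `ε_j ∈ {±1}`, and an integer `ℓ` coprime to `q`. -/
theorem conjugate_cyclic_subgroups_SO_odd_iff
    (n : ℕ) (hn : 1 ≤ n) (q : ℕ) (hq : 0 < q) (s s' : Fin n → ℤ)
    (hs : Int.gcd (q : ℤ) (Finset.univ.gcd s) = 1)
    (hs' : Int.gcd (q : ℤ) (Finset.univ.gcd s') = 1)
    (γ γ' : Matrix ((Fin 2 × Fin n) ⊕ Unit) ((Fin 2 × Fin n) ⊕ Unit) ℝ)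
    (hγ : γ = Matrix.fromBlocks
      (Matrix.blockDiagonal fun i => rotBlock (2 * Real.pi * (s i : ℝ) / (q : ℝ))) 0 0 1)
    (hγ' : γ' = Matrix.fromBlocks
      (Matrix.blockDiagonal fun i => rotBlock (2 * Real.pi * (s' i : ℝ) / (q : ℝ))) 0 0 1) :
    (∃ g : Matrix ((Fin 2 × Fin n) ⊕ Unit) ((Fin 2 × Fin n) ⊕ Unit) ℝ,
        g ∈ Matrix.specialOrthogonalGroup ((Fin 2 × Fin n) ⊕ Unit) ℝ ∧
          (fun x => g * x * g⁻¹) '' {x | ∃ k : ℕ, x = γ ^ k} = {x | ∃ k : ℕ, x = γ' ^ k}) ↔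
      ∃ (σ : Equiv.Perm (Fin n)) (ε : Fin n → ℤ) (ℓ : ℤ),
        (∀ j, ε j = 1 ∨ ε j = -1) ∧ Int.gcd ℓ (q : ℤ) = 1 ∧
          ∀ j, s (σ j) ≡ ε j * ℓ * s' j [ZMOD (q : ℤ)] :=
  conjugate_cyclic_subgroups_SO_odd_iff_general n q hq s s' hs γ γ' hγ hγ'
end

section
/- The congruence lattices L = {(a, b, c) ∈ ℤ³ : a + 2b + 3c ≡ 0 (mod 11)} and L' = {(a, b, c) ∈ ℤ³ : a + 2b + 4c ≡ 0 (mod 11)} are one-norm isospectral: for every integer k ≥ 0, #{(a, b, c) ∈ L : |a| + |b| + |c| = k} = #{(a, b, c) ∈ L' : |a| + |b| + |c| = k}. -/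
/-!
Every integer is uniquely `x + q m` (if `x ≥ 0`) or `x - q m` (if `x < 0`) with `x ∈ [-q, q)`
and `m ∈ ℕ`; it is congruent to `x` modulo `q` and its absolute value is `|x| + q m`. So a
subset of `ℤ³` cut out by conditions modulo `q` is the disjoint union, over its points `x` in the
box `[-q, q)³`, of copies of `ℕ³` on which the one-norm is `‖x‖₁ + q (m₁ + m₂ + m₃)`. The number
of its points of one-norm `k` thus depends only on the multiset of one-norms of its points in the
box, and for `q = 11` the multisets for `(1, 2, 3)` and `(1, 2, 4)` agree by a finite
computation.
-/

open Finset

namespace Int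

def shiftAway (q : ℕ) (x : ℤ) (m : ℕ) : ℤ := if 0 ≤ x then x + q * m else x - q * m

variable {q : ℕ}

theorem natAbs_shiftAway (x : ℤ) (m : ℕ) : (shiftAway q x m).natAbs = x.natAbs + q * m := by
  unfold shiftAway; split_ifs <;> omega

theorem shiftAway_modEq (x : ℤ) (m : ℕ) : shiftAway q x m ≡ x [ZMOD q] := by
  unfold shiftAway
  split_ifs
  · exact Int.add_mul_emod_self_left x q m
  · simp [Int.ModEq]

theorem exists_shiftAway_eq (hq : 0 < q) (a : ℤ) :
    ∃ x ∈ Ico (-(q : ℤ)) q, ∃ m : ℕ, shiftAway q x m = a := by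
  have hq' : (0 : ℤ) < q := by exact_mod_cast hq
  rcases le_or_gt 0 a with ha | ha
  · obtain ⟨m, hm⟩ := Int.eq_ofNat_of_zero_le (Int.ediv_nonneg ha hq'.le)
    have hr := Int.emod_nonneg a hq'.ne'
    refine ⟨a % q, mem_Ico.2 ⟨by omega, Int.emod_lt_of_pos a hq'⟩, m, ?_⟩
    rw [shiftAway, if_pos hr, ← hm, Int.emod_add_mul_ediv]
  · -- reflect through `a ↦ -a - 1`, which maps the negative integers onto `ℕ`
    set b := -a - 1
    obtain ⟨m, hm⟩ := Int.eq_ofNat_of_zero_le (Int.ediv_nonneg (by omega : 0 ≤ b) hq'.le)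
    have hr := Int.emod_nonneg b hq'.ne'
    have hb := Int.emod_add_mul_ediv b q
    refine ⟨-(b % q) - 1, mem_Ico.2 ⟨by linarith [Int.emod_lt_of_pos b hq'], by omega⟩, m, ?_⟩
    rw [shiftAway, if_neg (by omega), ← hm]
    linarith

theorem eq_and_eq_of_shiftAway_eq {x y : ℤ} {m n : ℕ} (hx : x ∈ Ico (-(q : ℤ)) q)
    (hy : y ∈ Ico (-(q : ℤ)) q) (h : shiftAway q x m = shiftAway q y n) : x = y ∧ m = n := by
  rw [mem_Ico] at hx hy
  have hq : (0 : ℤ) < q := by omega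
  have hqm : 0 ≤ (q : ℤ) * m := by positivity
  have hqn : 0 ≤ (q : ℤ) * n := by positivity
  have eq_of_add_mul_eq : ∀ {c d : ℤ}, 0 ≤ c → c < q → 0 ≤ d → d < q → c + q * m = d + q * n → c = d ∧ m = n :=
    fun hc hc' hd hd' e => by
      obtain ⟨h1, h2⟩ := (Int.ediv_emod_unique hq).2 ⟨e, hc, hc'⟩
      obtain ⟨h3, h4⟩ := (Int.ediv_emod_unique hq).2 ⟨rfl, hd, hd'⟩
      exact ⟨h2.symm.trans h4, by exact_mod_cast h1.symm.trans h3⟩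
  unfold shiftAway at h
  split_ifs at h with h0x h0y h0y
  · exact eq_of_add_mul_eq h0x hx.2 h0y hy.2 h
  · omega
  · omega
  · have e := eq_of_add_mul_eq (c := -x - 1) (d := -y - 1) (by omega) (by omega) (by omega) (by omega)
      (by linarith)
    exact ⟨by omega, e.2⟩

end Int

def oneNorm (p : ℤ × ℤ × ℤ) : ℕ := p.1.natAbs + p.2.1.natAbs + p.2.2.natAbs

def OneNormIsospectral (S S' : Set (ℤ × ℤ × ℤ)) : Prop :=
  ∀ k : ℕ, {p ∈ S | oneNorm p = k}.ncard = {p ∈ S' | oneNorm p = k}.ncard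

def IsPeriodicMod (q : ℕ) (S : Set (ℤ × ℤ × ℤ)) : Prop :=
  ∀ ⦃p p' : ℤ × ℤ × ℤ⦄, p.1 ≡ p'.1 [ZMOD q] → p.2.1 ≡ p'.2.1 [ZMOD q] → p.2.2 ≡ p'.2.2 [ZMOD q] →
    p ∈ S → p' ∈ S

def congruenceLattice (q : ℕ) (s : ℤ × ℤ × ℤ) : Set (ℤ × ℤ × ℤ) :=
  {p | (q : ℤ) ∣ p.1 * s.1 + p.2.1 * s.2.1 + p.2.2 * s.2.2}

instance (q : ℕ) (s : ℤ × ℤ × ℤ) : DecidablePred (· ∈ congruenceLattice q s) :=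
  fun p => inferInstanceAs (Decidable ((q : ℤ) ∣ p.1 * s.1 + p.2.1 * s.2.1 + p.2.2 * s.2.2))

theorem congruenceLattice_isPeriodicMod (q : ℕ) (s : ℤ × ℤ × ℤ) :
    IsPeriodicMod q (congruenceLattice q s) := by
  intro p p' h1 h2 h3 hp
  have h := ((h1.mul_right s.1).add (h2.mul_right s.2.1)).add (h3.mul_right s.2.2)
  exact (Int.ModEq.dvd_iff h).1 hp

section Counting

variable {q : ℕ}

def shiftAway₃ (q : ℕ) (x : ℤ × ℤ × ℤ) (m : ℕ × ℕ × ℕ) : ℤ × ℤ × ℤ :=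
  (Int.shiftAway q x.1 m.1, Int.shiftAway q x.2.1 m.2.1, Int.shiftAway q x.2.2 m.2.2)

noncomputable def fundamentalBox (q : ℕ) : Finset (ℤ × ℤ × ℤ) :=
  Ico (-(q : ℤ)) q ×ˢ Ico (-(q : ℤ)) q ×ˢ Ico (-(q : ℤ)) q

-- the bound `m ≤ k` on the coordinates is automatic once `0 < q`
def levelCount (q t k : ℕ) : ℕ :=
  #{m ∈ range (k + 1) ×ˢ range (k + 1) ×ˢ range (k + 1) | t + q * (m.1 + m.2.1 + m.2.2) = k}

theorem oneNorm_shiftAway₃ (x : ℤ × ℤ × ℤ) (m : ℕ × ℕ × ℕ) :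
    oneNorm (shiftAway₃ q x m) = oneNorm x + q * (m.1 + m.2.1 + m.2.2) := by
  simp only [oneNorm, shiftAway₃, Int.natAbs_shiftAway]
  ring

theorem IsPeriodicMod.shiftAway₃_mem_iff {S : Set (ℤ × ℤ × ℤ)} (hS : IsPeriodicMod q S)
    (x : ℤ × ℤ × ℤ) (m : ℕ × ℕ × ℕ) : shiftAway₃ q x m ∈ S ↔ x ∈ S := by
  have h1 := Int.shiftAway_modEq (q := q) x.1 m.1
  have h2 := Int.shiftAway_modEq (q := q) x.2.1 m.2.1
  have h3 := Int.shiftAway_modEq (q := q) x.2.2 m.2.2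
  exact ⟨hS h1 h2 h3, hS h1.symm h2.symm h3.symm⟩

theorem exists_shiftAway₃_eq (hq : 0 < q) (p : ℤ × ℤ × ℤ) :
    ∃ x ∈ fundamentalBox q, ∃ m, shiftAway₃ q x m = p := by
  obtain ⟨a, b, c⟩ := p
  obtain ⟨x₁, hx₁, m₁, rfl⟩ := Int.exists_shiftAway_eq hq a
  obtain ⟨x₂, hx₂, m₂, rfl⟩ := Int.exists_shiftAway_eq hq b
  obtain ⟨x₃, hx₃, m₃, rfl⟩ := Int.exists_shiftAway_eq hq c
  exact ⟨(x₁, x₂, x₃), mem_product.2 ⟨hx₁, mem_product.2 ⟨hx₂, hx₃⟩⟩, (m₁, m₂, m₃), rfl⟩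

theorem eq_and_eq_of_shiftAway₃_eq {x y : ℤ × ℤ × ℤ} {m n : ℕ × ℕ × ℕ}
    (hx : x ∈ fundamentalBox q) (hy : y ∈ fundamentalBox q)
    (h : shiftAway₃ q x m = shiftAway₃ q y n) : x = y ∧ m = n := by
  simp only [fundamentalBox, mem_product] at hx hy
  simp only [shiftAway₃, Prod.mk.injEq] at h
  have e₁ := Int.eq_and_eq_of_shiftAway_eq hx.1 hy.1 h.1
  have e₂ := Int.eq_and_eq_of_shiftAway_eq hx.2.1 hy.2.1 h.2.1
  have e₃ := Int.eq_and_eq_of_shiftAway_eq hx.2.2 hy.2.2 h.2.2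
  exact ⟨Prod.ext e₁.1 (Prod.ext e₂.1 e₃.1), Prod.ext e₁.2 (Prod.ext e₂.2 e₃.2)⟩

theorem ncard_oneNormSphere_eq_sum (hq : 0 < q) {S : Set (ℤ × ℤ × ℤ)} [DecidablePred (· ∈ S)]
    (hS : IsPeriodicMod q S) (k : ℕ) :
    {p ∈ S | oneNorm p = k}.ncard =
      ∑ x ∈ fundamentalBox q with x ∈ S, levelCount q (oneNorm x) k := by
  set M := range (k + 1) ×ˢ range (k + 1) ×ˢ range (k + 1)
  set D := ({x ∈ fundamentalBox q | x ∈ S}).sigma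
    fun x => {m ∈ M | oneNorm x + q * (m.1 + m.2.1 + m.2.2) = k}
  have hD : {p ∈ S | oneNorm p = k} = D.image (fun y => shiftAway₃ q y.1 y.2) := by
    ext p
    simp only [D, M, Set.mem_ofPred_eq, coe_image, Set.mem_image, mem_coe, mem_sigma, mem_filter,
      mem_product, mem_range, Sigma.exists]
    constructor
    · rintro ⟨hpS, rfl⟩
      obtain ⟨x, hx, m, rfl⟩ := exists_shiftAway₃_eq hq p
      have hm := Nat.le_mul_of_pos_left (m.1 + m.2.1 + m.2.2) hq
      rw [oneNorm_shiftAway₃]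
      exact ⟨x, m, ⟨⟨hx, (hS.shiftAway₃_mem_iff x m).1 hpS⟩, by omega⟩, rfl⟩
    · rintro ⟨x, m, ⟨⟨-, hxS⟩, -, hnorm⟩, rfl⟩
      exact ⟨(hS.shiftAway₃_mem_iff x m).2 hxS, (oneNorm_shiftAway₃ x m).trans hnorm⟩
  rw [hD, Set.ncard_coe_finset, card_image_of_injOn, card_sigma]
  · rfl
  rintro ⟨x, m⟩ hxm ⟨y, n⟩ hyn h
  obtain ⟨rfl, rfl⟩ := eq_and_eq_of_shiftAway₃_eq (mem_filter.1 (mem_sigma.1 hxm).1).1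
    (mem_filter.1 (mem_sigma.1 hyn).1).1 h
  rfl

theorem oneNormIsospectral_of_map_oneNorm_eq (hq : 0 < q) {S S' : Set (ℤ × ℤ × ℤ)}
    [DecidablePred (· ∈ S)] [DecidablePred (· ∈ S')] (hS : IsPeriodicMod q S)
    (hS' : IsPeriodicMod q S')
    (h : {x ∈ fundamentalBox q | x ∈ S}.val.map oneNorm =
      {x ∈ fundamentalBox q | x ∈ S'}.val.map oneNorm) :
    OneNormIsospectral S S' := by
  intro k
  rw [ncard_oneNormSphere_eq_sum hq hS, ncard_oneNormSphere_eq_sum hq hS', sum_eq_multiset_sum,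
    sum_eq_multiset_sum]
  simpa only [Multiset.map_map, Function.comp_def] using
    congrArg (fun s => (s.map fun t => levelCount q t k).sum) h

end Counting

set_option maxRecDepth 100000 in
theorem map_oneNorm_fundamentalBox_congruenceLattice_11_123_eq_124 :
    {x ∈ fundamentalBox 11 | x ∈ congruenceLattice 11 (1, 2, 3)}.val.map oneNorm =
      {x ∈ fundamentalBox 11 | x ∈ congruenceLattice 11 (1, 2, 4)}.val.map oneNorm := by
  decide +kernel

/-- **Ikeda's isospectral pair `L(11;1,2,3)`, `L(11;1,2,4)` via congruence lattices.**
The congruence lattices `{(a,b,c) ∈ ℤ³ : a + 2b + 3c ≡ 0 (mod 11)}` and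
`{(a,b,c) ∈ ℤ³ : a + 2b + 4c ≡ 0 (mod 11)}` are one-norm isospectral: they have the same
number of elements of one-norm `k` for every `k ≥ 0`. -/
theorem one_norm_isospectral_L11_123_124 :
    ∀ k : ℕ,
      Set.ncard {p : ℤ × ℤ × ℤ | (11 : ℤ) ∣ (p.1 + 2 * p.2.1 + 3 * p.2.2) ∧
          p.1.natAbs + p.2.1.natAbs + p.2.2.natAbs = k} =
      Set.ncard {p : ℤ × ℤ × ℤ | (11 : ℤ) ∣ (p.1 + 2 * p.2.1 + 4 * p.2.2) ∧
          p.1.natAbs + p.2.1.natAbs + p.2.2.natAbs = k} := by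
  have h := oneNormIsospectral_of_map_oneNorm_eq (by norm_num)
    (congruenceLattice_isPeriodicMod 11 (1, 2, 3)) (congruenceLattice_isPeriodicMod 11 (1, 2, 4))
    map_oneNorm_fundamentalBox_congruenceLattice_11_123_eq_124
  simpa [OneNormIsospectral, congruenceLattice, oneNorm, mul_comm] using h
end
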